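/- Let G be an undirected social network with total edge weight W > 0 and total self-weight N, let λ = N/W, let p = 2 − √2, and let q = max{ 1 − √2(2 + λ)/4, 0 }. Then the expected revenue of the randomized Influence-and-Exploit strategy that places each buyer in the influence set independently with probability q, namely Σ_{A ⊆ V} q^{|A|}(1 − q)^{|V| − |A|} R_IE(A, p), equals (1 − q)p(1 − p)(λ + 2q + p(1 − q))W and is at least 2√2(2 − √2)(√2 − 1) ≈ 0.686 times the maximum revenue R_max(G). In particular, there exists A ⊆ V with R_IE(A, 2 − √2) ≥ 2√2(2 − √2)(√2 − 1)·R_max(G). -/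

import Mathlib

open Finset

/-- The revenue of a marketing strategy `(π, p)` on an undirected social network. -/
noncomputable def revenue {V : Type*} [Fintype V] [DecidableEq V]
    (w : V → V → ℝ) (π : V ≃ Fin (Fintype.card V)) (p : V → ℝ) : ℝ :=
  ∑ i, p i * (1 - p i) *
    (w i i + ∑ j ∈ univ.filter (fun j => π j < π i), p j * w j i)

/-- The maximum revenue of an undirected social network. -/
noncomputable def maxRev {V : Type*} [Fintype V] [DecidableEq V]
    (w : V → V → ℝ) : ℝ :=
  sSup {r | ∃ (π : V ≃ Fin (Fintype.card V)) (p : V → ℝ),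
    (∀ i, 1/2 ≤ p i ∧ p i ≤ 1) ∧ r = revenue w π p}

/-- The expected revenue of the Influence-and-Exploit strategy `IE(A, p)`. -/
noncomputable def ieRev {V : Type*} [Fintype V] [DecidableEq V]
    (w : V → V → ℝ) (A : Finset V) (p : ℝ) : ℝ :=
  p * (1 - p) * ∑ i ∈ Aᶜ,
    (w i i + ∑ j ∈ A, w j i + (p / 2) * ∑ j ∈ Aᶜ \ {i}, w j i)

/-- `W`: total edge weight (each unordered pair counted once). -/
noncomputable def totalEdge {V : Type*} [Fintype V] [DecidableEq V]
    (w : V → V → ℝ) : ℝ :=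
  (∑ i, ∑ j ∈ ({i} : Finset V)ᶜ, w i j) / 2

/-- `N`: total self-weight. -/
noncomputable def totalSelf {V : Type*} [Fintype V] (w : V → V → ℝ) : ℝ :=
  ∑ i, w i i

/-!
If each buyer joins `A` independently with probability `q`, then `i ∉ A` with probability
`1 - q`, and for `j ≠ i` the edge `ji` pays `i` in full when `j ∈ A` and with factor `p / 2`
when `j ∉ A`; the expected coefficient is `(1 - q) (q + (1 - q) p / 2)`, which gives the closed
form. Every strategy earns at most `(N + W) / 4`: `p (1 - p) ≤ 1 / 4`, and for a fixed order
each edge is counted from its later endpoint only. Comparing the closed form with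
`(1 + λ) W / 4` is an inequality in `λ` alone, and some `A` does at least as well as the
average.
-/

section

variable {V : Type*} [Fintype V]

def subsetProb {R : Type*} [CommRing R] (q : R) (A : Finset V) : R :=
  q ^ #A * (1 - q) ^ (Fintype.card V - #A)

theorem subsetProb_nonneg {R : Type*} [CommRing R] [PartialOrder R] [IsOrderedRing R] {q : R}
    (hq₀ : 0 ≤ q) (hq₁ : q ≤ 1) (A : Finset V) : 0 ≤ subsetProb q A :=
  mul_nonneg (pow_nonneg hq₀ _) (pow_nonneg (sub_nonneg.2 hq₁) _)

variable [DecidableEq V]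

section CommRing

variable {R : Type*} [CommRing R]

theorem sum_subsetProb_mul_prod_mul_prod_compl (q : R) (f g : V → R) :
    ∑ A : Finset V, subsetProb q A * ((∏ v ∈ A, f v) * ∏ v ∈ Aᶜ, g v) =
      ∏ v, (q * f v + (1 - q) * g v) := by
  rw [Fintype.prod_add]
  refine sum_congr rfl fun A _ => ?_
  rw [subsetProb, prod_mul_distrib, prod_mul_distrib, prod_const, prod_const, card_compl]
  ring

theorem sum_subsetProb (q : R) : ∑ A : Finset V, subsetProb q A = 1 := by
  simpa using sum_subsetProb_mul_prod_mul_prod_compl (V := V) q 1 1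

theorem sum_subsetProb_mul_ite_mem (q : R) (i : V) :
    ∑ A : Finset V, subsetProb q A * (if i ∈ A then 0 else 1) = 1 - q := by
  have h := sum_subsetProb_mul_prod_mul_prod_compl q (fun v => if v = i then 0 else 1) 1
  simp only [prod_ite_eq', Pi.one_apply, prod_const_one, mul_one] at h
  rw [h, prod_eq_single i (fun v _ hvi => by simp [hvi]) (by simp)]
  simp

theorem sum_subsetProb_mul_ite_mem_ite_mem (q c : R) {i j : V} (hij : i ≠ j) :
    ∑ A : Finset V, subsetProb q A * (if i ∈ A then 0 else if j ∈ A then 1 else c) =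
      (1 - q) * (q + (1 - q) * c) := by
  have h := sum_subsetProb_mul_prod_mul_prod_compl q (fun v => if v = i then 0 else 1)
    (fun v => if v = j then c else 1)
  simp only [prod_ite_eq', mem_compl] at h
  rw [prod_eq_mul i j hij (fun v _ hv => by simp [hv]) (by simp) (by simp)] at h
  simp only [if_pos, if_neg hij, if_neg hij.symm, mul_zero, mul_one, zero_add] at h
  rw [← h]
  refine sum_congr rfl fun A _ => ?_
  split_ifs <;> simp_all

end CommRing

theorem ieRev_eq_sum (w : V → V → ℝ) (A : Finset V) (p : ℝ) :
    ieRev w A p = p * (1 - p) * ∑ i, ((if i ∈ A then 0 else 1) * w i i +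
      ∑ j ∈ {i}ᶜ, (if i ∈ A then 0 else if j ∈ A then 1 else p / 2) * w j i) := by
  rw [ieRev, ← sum_compl_add_sum A, sum_eq_zero (s := A) fun i hi => by simp [hi], add_zero]
  congr 1
  refine sum_congr rfl fun i hi => ?_
  rw [mem_compl] at hi
  simp only [hi, if_false, one_mul, ite_mul, sum_ite, add_assoc, mul_sum]
  congr 3 <;> ext j <;> simp only [mem_filter, mem_compl, mem_singleton, mem_sdiff] <;> grind

theorem sum_subsetProb_mul_ieRev (w : V → V → ℝ) (p q : ℝ) :
    ∑ A : Finset V, subsetProb q A * ieRev w A p =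
      p * (1 - p) * (1 - q) *
        (totalSelf w + (q + (1 - q) * (p / 2)) * ∑ i, ∑ j ∈ {i}ᶜ, w j i) := by
  have hswap : ∑ A : Finset V, subsetProb q A * ieRev w A p = p * (1 - p) *
      ∑ i, ∑ A : Finset V, subsetProb q A * ((if i ∈ A then 0 else 1) * w i i +
        ∑ j ∈ {i}ᶜ, (if i ∈ A then 0 else if j ∈ A then 1 else p / 2) * w j i) := by
    simp only [ieRev_eq_sum, mul_left_comm (subsetProb q _), mul_sum]
    exact sum_comm
  have hvertex : ∀ i, ∑ A : Finset V, subsetProb q A * ((if i ∈ A then 0 else 1) * w i i +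
      ∑ j ∈ {i}ᶜ, (if i ∈ A then 0 else if j ∈ A then 1 else p / 2) * w j i) =
      (1 - q) * w i i + ∑ j ∈ {i}ᶜ, (1 - q) * (q + (1 - q) * (p / 2)) * w j i := by
    intro i
    simp only [mul_add, sum_add_distrib, mul_sum, ← mul_assoc]
    rw [sum_comm]
    simp only [← sum_mul]
    rw [sum_subsetProb_mul_ite_mem]
    congr 1
    refine sum_congr rfl fun j hj => ?_
    rw [sum_subsetProb_mul_ite_mem_ite_mem _ _ (by simpa [eq_comm] using hj)]
    ring
  rw [hswap, sum_congr rfl fun i _ => hvertex i, sum_add_distrib, ← mul_sum, totalSelf]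
  simp only [← mul_sum]
  ring

theorem sum_sum_compl_singleton_eq_two_mul_totalEdge (w : V → V → ℝ) :
    ∑ i, ∑ j ∈ {i}ᶜ, w j i = 2 * totalEdge w := by
  rw [totalEdge, mul_div_cancel₀ _ two_ne_zero]
  exact sum_comm' fun i j => by simp [eq_comm]

theorem sum_sum_filter_lt_eq_totalEdge {α : Type*} [LinearOrder α] {w : V → V → ℝ}
    (hsymm : ∀ i j, w i j = w j i) {π : V → α} (hπ : Function.Injective π) :
    ∑ i, ∑ j ∈ univ.filter (fun j => π j < π i), w j i = totalEdge w := by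
  have hsplit : ∀ i, ∑ j ∈ {i}ᶜ, w j i = ∑ j ∈ univ.filter (fun j => π j < π i), w j i +
      ∑ j ∈ univ.filter (fun j => π i < π j), w j i := by
    intro i
    rw [← sum_filter_add_sum_filter_not _ (fun j => π j < π i)]
    congr 1 <;> refine sum_congr (ext fun j => ?_) fun _ _ => rfl <;>
      simp only [mem_filter, mem_compl, mem_singleton, mem_univ, true_and, not_lt]
    · exact ⟨And.right, fun h => ⟨by rintro rfl; exact lt_irrefl _ h, h⟩⟩
    · exact ⟨fun h => lt_of_le_of_ne h.2 fun h' => h.1 (hπ h').symm,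
        fun h => ⟨by rintro rfl; exact lt_irrefl _ h, h.le⟩⟩
  have hmirror : ∑ i, ∑ j ∈ univ.filter (fun j => π i < π j), w j i =
      ∑ i, ∑ j ∈ univ.filter (fun j => π j < π i), w j i := by
    rw [sum_comm' (s' := fun j => univ.filter (fun i => π i < π j)) (t' := univ)
      fun i j => by simp]
    exact sum_congr rfl fun i _ => sum_congr rfl fun j _ => hsymm i j
  have := sum_sum_compl_singleton_eq_two_mul_totalEdge w
  rw [sum_congr rfl fun i _ => hsplit i, sum_add_distrib, hmirror] at this
  linarith

theorem revenue_le {w : V → V → ℝ} (hnonneg : ∀ i j, 0 ≤ w i j) (π : V ≃ Fin (Fintype.card V))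
    {p : V → ℝ} (hp : ∀ i, 0 ≤ p i ∧ p i ≤ 1) :
    revenue w π p ≤ (totalSelf w + ∑ i, ∑ j ∈ univ.filter (fun j => π j < π i), w j i) / 4 := by
  rw [totalSelf, ← sum_add_distrib, sum_div]
  refine sum_le_sum fun i _ => ?_
  obtain ⟨hp₀, hp₁⟩ := hp i
  have hinfluence : ∑ j ∈ univ.filter (fun j => π j < π i), p j * w j i ≤
      ∑ j ∈ univ.filter (fun j => π j < π i), w j i :=
    sum_le_sum fun j _ => mul_le_of_le_one_left (hnonneg j i) (hp j).2
  have hvalue : 0 ≤ w i i + ∑ j ∈ univ.filter (fun j => π j < π i), p j * w j i :=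
    add_nonneg (hnonneg i i) (sum_nonneg fun j _ => mul_nonneg (hp j).1 (hnonneg j i))
  have hprice : p i * (1 - p i) ≤ 1 / 4 := by nlinarith [sq_nonneg (p i - 1 / 2)]
  calc p i * (1 - p i) * (w i i + ∑ j ∈ univ.filter (fun j => π j < π i), p j * w j i)
      ≤ 1 / 4 * (w i i + ∑ j ∈ univ.filter (fun j => π j < π i), w j i) :=
        mul_le_mul hprice (by linarith) hvalue (by norm_num)
    _ = _ := by ring

theorem maxRev_le {w : V → V → ℝ} (hsymm : ∀ i j, w i j = w j i) (hnonneg : ∀ i j, 0 ≤ w i j) :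
    maxRev w ≤ (totalEdge w + totalSelf w) / 4 := by
  have hW : 0 ≤ totalEdge w :=
    div_nonneg (sum_nonneg fun i _ => sum_nonneg fun j _ => hnonneg i j) zero_le_two
  have hN : 0 ≤ totalSelf w := sum_nonneg fun i _ => hnonneg i i
  refine Real.sSup_le ?_ (by positivity)
  rintro r ⟨π, p, hp, rfl⟩
  have := revenue_le hnonneg π fun i => ⟨by linarith [hp i], (hp i).2⟩
  rwa [sum_sum_filter_lt_eq_totalEdge hsymm π.injective, add_comm] at this

end

theorem exists_sum_mul_le {ι : Type*} [Fintype ι] [Nonempty ι] {μ : ι → ℝ} (hμ : ∀ i, 0 ≤ μ i)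
    (hμ₁ : ∑ i, μ i = 1) (f : ι → ℝ) : ∃ i, ∑ j, μ j * f j ≤ f i := by
  obtain ⟨i, -, hi⟩ := exists_max_image univ f univ_nonempty
  refine ⟨i, ?_⟩
  calc ∑ j, μ j * f j ≤ ∑ j, μ j * f i :=
        sum_le_sum fun j hj => mul_le_mul_of_nonneg_left (hi j hj) (hμ j)
    _ = f i := by rw [← sum_mul, hμ₁, one_mul]

theorem approxRatio_mul_le_randomizedIE_coeff {lam q : ℝ} (hlam : 0 ≤ lam)
    (hq : q = max (1 - √2 * (2 + lam) / 4) 0) :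
    2 * √2 * (2 - √2) * (√2 - 1) * (1 + lam) / 4 ≤
      (1 - q) * (2 - √2) * (1 - (2 - √2)) * (lam + 2 * q + (2 - √2) * (1 - q)) := by
  have hs : √2 ^ 2 = 2 := Real.sq_sqrt zero_le_two
  have hs₀ : 0 ≤ √2 := Real.sqrt_nonneg 2
  have hc : 2 * √2 * (2 - √2) * (√2 - 1) = 12 - 8 * √2 := by linear_combination (6 - 2 * √2) * hs
  have hp : (2 - √2) * (1 - (2 - √2)) = 3 * √2 - 4 := by linear_combination -hs
  rw [hc, mul_assoc (1 - q), hp]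
  rcases le_total (1 - √2 * (2 + lam) / 4) 0 with h | h
  · rw [max_eq_right h] at hq
    subst hq
    -- here `λ ≥ 2√2 - 2`, and the gap is at least `(5√2 - 7) (λ - (2√2 - 2)) + 17 - 12√2`
    have h17 : 12 * √2 ≤ 17 := by nlinarith
    have h57 : 0 ≤ 5 * √2 - 7 := by nlinarith
    nlinarith [mul_nonneg h57 (show 0 ≤ lam - (2 * √2 - 2) by nlinarith)]
  · rw [max_eq_left h] at hq
    subst hq
    have h64 : 0 ≤ 6 - 4 * √2 := by nlinarith
    -- the gap is `(6 - 4√2) λ² / 8`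
    linear_combination (mul_nonneg h64 (sq_nonneg lam)) / 8 -
      (2 + lam) ^ 2 * (6 + 4 * √2 - 3 * √2 ^ 2) / 16 * hs

/-- For an undirected social network with `λ = N/W`, `p = 2 - √2` and
`q = max{1 - √2(2+λ)/4, 0}`, the expected revenue of the randomized IE strategy that
places each buyer in the influence set independently with probability `q` equals
`(1-q)p(1-p)(λ + 2q + p(1-q))W`, and it is at least `2√2(2-√2)(√2-1)` times the
maximum revenue; in particular some influence set achieves this guarantee. -/
theorem randomized_IE_undirected
    {V : Type*} [Fintype V] [DecidableEq V] (w : V → V → ℝ)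
    (hsymm : ∀ i j, w i j = w j i) (hnonneg : ∀ i j, 0 ≤ w i j)
    (hW : 0 < totalEdge w)
    (lam p q : ℝ)
    (hlam : lam = totalSelf w / totalEdge w)
    (hp : p = 2 - Real.sqrt 2)
    (hq : q = max (1 - Real.sqrt 2 * (2 + lam) / 4) 0) :
    (∑ A : Finset V,
        q ^ A.card * (1 - q) ^ (Fintype.card V - A.card) * ieRev w A p
      = (1 - q) * p * (1 - p) * (lam + 2 * q + p * (1 - q)) * totalEdge w) ∧
    (∑ A : Finset V,
        q ^ A.card * (1 - q) ^ (Fintype.card V - A.card) * ieRev w A p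
      ≥ 2 * Real.sqrt 2 * (2 - Real.sqrt 2) * (Real.sqrt 2 - 1) * maxRev w) ∧
    ∃ A : Finset V,
      ieRev w A (2 - Real.sqrt 2)
        ≥ 2 * Real.sqrt 2 * (2 - Real.sqrt 2) * (Real.sqrt 2 - 1) * maxRev w := by
  subst hp
  have hlam₀ : 0 ≤ lam := hlam ▸ div_nonneg (sum_nonneg fun i _ => hnonneg i i) hW.le
  have hN : totalSelf w = lam * totalEdge w := by rw [hlam, div_mul_cancel₀ _ hW.ne']
  have hq₀ : 0 ≤ q := hq ▸ le_max_right _ _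
  have hq₁ : q ≤ 1 := hq ▸ max_le (sub_le_self 1 (by positivity)) zero_le_one
  have hexp : ∑ A : Finset V, subsetProb q A * ieRev w A (2 - √2) =
      (1 - q) * (2 - √2) * (1 - (2 - √2)) * (lam + 2 * q + (2 - √2) * (1 - q)) * totalEdge w := by
    rw [sum_subsetProb_mul_ieRev, sum_sum_compl_singleton_eq_two_mul_totalEdge, hN]
    ring
  have hc : 0 ≤ 2 * √2 * (2 - √2) * (√2 - 1) := by
    have := Real.one_lt_sqrt_two
    have : √2 < 2 := by nlinarith [Real.sq_sqrt zero_le_two]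
    exact mul_nonneg (mul_nonneg (by positivity) (by linarith)) (by linarith)
  have hbound : 2 * √2 * (2 - √2) * (√2 - 1) * maxRev w ≤
      ∑ A : Finset V, subsetProb q A * ieRev w A (2 - √2) :=
    calc 2 * √2 * (2 - √2) * (√2 - 1) * maxRev w
        ≤ 2 * √2 * (2 - √2) * (√2 - 1) * ((totalEdge w + totalSelf w) / 4) :=
          mul_le_mul_of_nonneg_left (maxRev_le hsymm hnonneg) hc
      _ = 2 * √2 * (2 - √2) * (√2 - 1) * (1 + lam) / 4 * totalEdge w := by rw [hN]; ring
      _ ≤ _ := mul_le_mul_of_nonneg_right (approxRatio_mul_le_randomizedIE_coeff hlam₀ hq) hW.le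
      _ = _ := hexp.symm
  obtain ⟨A, hA⟩ := exists_sum_mul_le (subsetProb_nonneg hq₀ hq₁) (sum_subsetProb q)
    (ieRev w · (2 - √2))
  exact ⟨hexp, hbound, A, hbound.trans hA⟩
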